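/- Strict positive realness is convex in the denominator: if c(s)/a(s) and c(s)/b(s) are both strictly positive real, then for every λ ∈ [0,1], c(s)/(λ a(s) + (1−λ) b(s)) is strictly positive real. -/

import Mathlib

open Polynomial

/-- A real polynomial is Hurwitz stable if all of its complex roots have
negative real part. -/
def Hurwitz (p : Polynomial ℝ) : Prop :=
  ∀ z : ℂ, (p.map (algebraMap ℝ ℂ)).IsRoot z → z.re < 0

/-- Evaluation of a real polynomial at the purely imaginary number `i ω`. -/
noncomputable def evalI (p : Polynomial ℝ) (ω : ℝ) : ℂ :=
  Polynomial.aeval ((ω : ℂ) * Complex.I) p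

/-- `c / q` is strictly positive real. -/
def SPR (c q : Polynomial ℝ) : Prop :=
  c.degree = q.degree ∧ Hurwitz q ∧ ∀ ω : ℝ, 0 < (evalI c ω / evalI q ω).re

/-!
Write `q = μa + (1-μ)b`. Where `c(z) ≠ 0`, `Re (c/q)(z) > 0` iff `Re (q/c)(z) > 0`, and `q/c`
is affine in `q`; as the open right half-plane is convex, `c/q` has positive real part wherever
`c/a` and `c/b` do. For an SPR pair this holds on the whole closed right half-plane: `Re (c/a)` is
positive on the imaginary axis and near infinity (where `c/a` tends to the real number
`lc c / lc a`, positive by the frequency condition), so the minimum principle for `Re (c/a)`, i.e.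
the maximum modulus principle for `exp (-c/a)`, carries positivity inside. This gives the
frequency condition and Hurwitz stability of `q` at once; and as the leading coefficients of `a`
and `b` both have the sign of that of `c`, `q` keeps the degree of `c`.
-/

open Filter Bornology Topology

namespace Polynomial

lemma eval_reverse_inv_mul_pow {K : Type*} [Field K] (P : K[X]) {z : K} (hz : z ≠ 0) :
    P.reverse.eval z⁻¹ * z ^ P.natDegree = P.eval z := by
  let := invertibleOfNonzero hz
  simpa only [invOf_eq_inv, eval₂_id] using eval₂_reverse_mul_pow (RingHom.id K) z P

theorem tendsto_eval_div_eval_cobounded {𝕜 : Type*} [NormedField 𝕜] {P Q : 𝕜[X]}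
    (hdeg : P.natDegree = Q.natDegree) (hQ : Q ≠ 0) :
    Tendsto (fun z => P.eval z / Q.eval z) (cobounded 𝕜)
      (𝓝 (P.leadingCoeff / Q.leadingCoeff)) := by
  have hrev : Tendsto (fun z => P.reverse.eval z⁻¹ / Q.reverse.eval z⁻¹) (cobounded 𝕜)
      (𝓝 (P.leadingCoeff / Q.leadingCoeff)) := by
    rw [← coeff_zero_reverse, ← coeff_zero_reverse, coeff_zero_eq_eval_zero,
      coeff_zero_eq_eval_zero]
    refine ((P.reverse.continuous.tendsto 0).div (Q.reverse.continuous.tendsto 0) ?_).comp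
      tendsto_inv₀_cobounded
    rwa [← coeff_zero_eq_eval_zero, coeff_zero_reverse, leadingCoeff_ne_zero]
  refine hrev.congr' ((eventually_ne_cobounded 0).mono fun z hz => ?_)
  dsimp only
  rw [← P.eval_reverse_inv_mul_pow hz, ← Q.eval_reverse_inv_mul_pow hz, hdeg,
    mul_div_mul_right _ _ (pow_ne_zero _ hz)]

lemma degree_smul_add_smul {K : Type*} [Field K] [LinearOrder K]
    [IsStrictOrderedRing K] {a b : K[X]} (hab : a.degree = b.degree)
    (hlc : 0 < a.leadingCoeff * b.leadingCoeff) {μ : K} (hμ : μ ∈ Set.Icc (0 : K) 1) :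
    (μ • a + (1 - μ) • b).degree = a.degree := by
  have ha : a ≠ 0 := by rintro rfl; simp at hlc
  have hnat : b.natDegree = a.natDegree := natDegree_eq_of_degree_eq hab.symm
  rw [degree_eq_natDegree ha] at hab ⊢
  refine degree_eq_of_le_of_coeff_ne_zero ((degree_add_le _ _).trans
    (max_le ((degree_smul_le _ _).trans (degree_eq_natDegree ha).le)
      ((degree_smul_le _ _).trans hab.ge))) ?_
  have hb : b.coeff a.natDegree = b.leadingCoeff := by rw [leadingCoeff, hnat]
  rw [coeff_add, coeff_smul, coeff_smul, coeff_natDegree, hb, smul_eq_mul, smul_eq_mul]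
  intro h
  rcases hμ.1.eq_or_lt with rfl | hμ0
  · simp_all
  · nlinarith [congrArg (· * a.leadingCoeff) h, mul_nonneg (sub_nonneg.2 hμ.2) hlc.le,
      mul_pos hμ0 (mul_self_pos.2 (leadingCoeff_ne_zero.2 ha))]

end Polynomial

namespace Complex

lemma re_inv_pos_iff {z : ℂ} : 0 < z⁻¹.re ↔ 0 < z.re := by
  rcases eq_or_ne z 0 with rfl | hz
  · simp
  · rw [inv_re, div_pos_iff_of_pos_right (normSq_pos.2 hz)]

lemma re_div_smul_add_smul_pos {w u v : ℂ} {μ : ℝ} (hμ : μ ∈ Set.Icc (0 : ℝ) 1)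
    (hu : 0 < (w / u).re) (hv : 0 < (w / v).re) : 0 < (w / (μ • u + (1 - μ) • v)).re := by
  rw [← inv_div, re_inv_pos_iff] at hu hv ⊢
  rw [add_div, smul_div_assoc, smul_div_assoc]
  exact convex_halfSpace_re_gt 0 hu hv hμ.1 (sub_nonneg.2 hμ.2) (add_sub_cancel _ _)


lemma re_pos_of_forall_mem_frontier_re_pos {f : ℂ → ℂ} {U : Set ℂ} (hU : IsBounded U)
    (hf : DiffContOnCl ℂ f U) (hfr : ∀ z ∈ frontier U, 0 < (f z).re) {z : ℂ}
    (hz : z ∈ closure U) : 0 < (f z).re := by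
  obtain ⟨m, hm, hmf⟩ := (hU.isCompact_closure.of_isClosed_subset isClosed_frontier
    frontier_subset_closure).exists_forall_le'
    (continuous_re.comp_continuousOn (hf.continuousOn.mono frontier_subset_closure)) hfr
  -- maximum modulus principle for `exp ∘ (-f)`, whose modulus is `exp (-Re f)`
  have := norm_le_of_forall_mem_frontier_norm_le hU (differentiable_exp.comp_diffContOnCl hf.neg)
    (C := Real.exp (-m)) (fun w hw => by simpa [norm_exp] using hmf w hw) hz
  simp only [Function.comp_apply, Pi.neg_apply, norm_exp, neg_re, Real.exp_le_exp] at this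
  linarith

lemma re_pos_of_re_nonneg {f : ℂ → ℂ} (hf : DifferentiableOn ℂ f {z | 0 ≤ z.re})
    (him : ∀ ω : ℝ, 0 < (f (ω * I)).re) (hinf : ∀ᶠ z in cobounded ℂ, 0 < (f z).re) {z : ℂ}
    (hz : 0 ≤ z.re) : 0 < (f z).re := by
  rcases hz.eq_or_lt with hz | hz
  · convert him z.im using 3
    apply Complex.ext <;> simp [← hz]
  obtain ⟨R, -, hR⟩ := hasBasis_cobounded_norm.eventually_iff.1 hinf
  set U := {w : ℂ | 0 < w.re} ∩ Metric.ball 0 (max R (‖z‖ + 1))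
  have hclU : closure U ⊆ {w | 0 ≤ w.re} :=
    (closure_mono Set.inter_subset_left).trans (closure_setOfPred_lt_re 0).subset
  refine re_pos_of_forall_mem_frontier_re_pos
    (Metric.isBounded_ball.subset Set.inter_subset_right) (hf.mono hclU).diffContOnCl
    (fun w hw => ?_) (subset_closure ⟨hz, by simp⟩)
  rcases frontier_inter_subset _ _ hw with ⟨hw, -⟩ | ⟨-, hw⟩
  · rw [frontier_setOfPred_lt_re] at hw
    convert him w.im using 3
    apply Complex.ext <;> simp [show w.re = 0 from hw]
  · have hwR : ‖w‖ = max R (‖z‖ + 1) := by simpa using Metric.frontier_ball_subset_sphere hw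
    exact hR (hwR.ge.trans' (le_max_left _ _))

end Complex

lemma Hurwitz.aeval_ne_zero {p : ℝ[X]} (hp : Hurwitz p) {z : ℂ} (hz : 0 ≤ z.re) :
    aeval z p ≠ 0 :=
  fun h => (hp z (by rwa [IsRoot, eval_map_algebraMap])).not_ge hz

lemma Hurwitz.ne_zero {p : ℝ[X]} (hp : Hurwitz p) : p ≠ 0 := by
  rintro rfl
  exact hp.aeval_ne_zero (z := 0) le_rfl (map_zero _)

namespace SPR

variable {c a : ℝ[X]}

lemma tendsto_cobounded (h : SPR c a) :
    Tendsto (fun z : ℂ => aeval z c / aeval z a) (cobounded ℂ)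
      (𝓝 ((c.leadingCoeff / a.leadingCoeff : ℝ) : ℂ)) := by
  have hdeg : (c.map (algebraMap ℝ ℂ)).natDegree = (a.map (algebraMap ℝ ℂ)).natDegree := by
    rw [natDegree_map, natDegree_map, natDegree_eq_of_degree_eq h.1]
  simpa [eval_map_algebraMap, leadingCoeff_map] using
    tendsto_eval_div_eval_cobounded hdeg (map_ne_zero h.2.1.ne_zero)

lemma leadingCoeff_div_pos (h : SPR c a) : 0 < c.leadingCoeff / a.leadingCoeff := by
  have ha := h.2.1.ne_zero
  have hc : c ≠ 0 := by
    rintro rfl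
    exact ha (degree_eq_bot.1 (h.1.symm.trans degree_zero))
  refine (div_ne_zero (leadingCoeff_ne_zero.2 hc) (leadingCoeff_ne_zero.2 ha)).symm.lt_of_le ?_
  have him : Tendsto (fun ω : ℝ => (ω : ℂ) * Complex.I) atTop (cobounded ℂ) :=
    tendsto_norm_atTop_iff_cobounded.1 (by simpa using tendsto_abs_atTop_atTop)
  have hre := (Complex.continuous_re.tendsto _).comp (h.tendsto_cobounded.comp him)
  simpa using ge_of_tendsto hre (Eventually.of_forall fun ω => (h.2.2 ω).le)

lemma re_div_pos (h : SPR c a) {z : ℂ} (hz : 0 ≤ z.re) : 0 < (aeval z c / aeval z a).re := by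
  refine Complex.re_pos_of_re_nonneg (f := fun z => aeval z c / aeval z a) (fun w hw => ?_)
    h.2.2 ?_ hz
  · exact (DifferentiableAt.div (c.differentiableAt_aeval (x := w)) a.differentiableAt_aeval
      (h.2.1.aeval_ne_zero hw)).differentiableWithinAt
  · exact ((Complex.continuous_re.tendsto _).comp h.tendsto_cobounded).eventually
      (lt_mem_nhds (by simpa using h.leadingCoeff_div_pos))

end SPR

theorem stmt_1_general (a b c : Polynomial ℝ)
    (hca : SPR c a) (hcb : SPR c b) :
    ∀ μ : ℝ, μ ∈ Set.Icc (0 : ℝ) 1 → SPR c (μ • a + (1 - μ) • b) := by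
  intro μ hμ
  have hq : ∀ z : ℂ, 0 ≤ z.re → 0 < (aeval z c / aeval z (μ • a + (1 - μ) • b)).re :=
    fun z hz => by
      simpa only [map_add, map_smul] using
        Complex.re_div_smul_add_smul_pos hμ (hca.re_div_pos hz) (hcb.re_div_pos hz)
  have hlc : 0 < a.leadingCoeff * b.leadingCoeff := by
    have := mul_pos hca.leadingCoeff_div_pos hcb.leadingCoeff_div_pos
    rw [div_mul_div_comm] at this
    rcases div_pos_iff.1 this with ⟨-, h⟩ | ⟨h, -⟩
    · exact h
    · exact absurd h (mul_self_nonneg _).not_gt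
  refine ⟨?_, fun z hz => ?_, fun ω => hq _ (by simp)⟩
  · rw [degree_smul_add_smul (hca.1.symm.trans hcb.1) hlc hμ, hca.1]
  · by_contra! hre
    -- `x / 0 = 0` in Lean, so a root in the closed right half-plane contradicts `hq`
    have := hq z hre
    rw [show aeval z (μ • a + (1 - μ) • b) = 0 by rwa [IsRoot, eval_map_algebraMap] at hz,
      div_zero, Complex.zero_re] at this
    exact this.false

theorem stmt_1 (n : ℕ) (a b c : Polynomial ℝ)
    (haM : a.Monic) (hbM : b.Monic)
    (hna : a.natDegree = n) (hnb : b.natDegree = n)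
    (hca : SPR c a) (hcb : SPR c b) :
    ∀ μ : ℝ, μ ∈ Set.Icc (0 : ℝ) 1 → SPR c (μ • a + (1 - μ) • b) :=
  stmt_1_general a b c hca hcb
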